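/- For every integer n ≥ 6, the characteristic polynomial of the signless Laplacian matrix of the graph B_n² equals x (x−1)^{n−6} (x−2)² (x³ − (n+4)x² + (5n−2)x − 3n). -/

import Mathlib

open Polynomial

/-- The signless Laplacian matrix `Q(G) = D(G) + A(G)` of a simple graph, over `ℝ`. -/
noncomputable def signlessLaplacian {V : Type*} [Fintype V] [DecidableEq V]
    (G : SimpleGraph V) : Matrix V V ℝ :=
  letI := Classical.decRel G.Adj
  G.degMatrix ℝ + G.adjMatrix ℝ

/-- The signless Laplacian characteristic polynomial `Q_G(x) = det (x I - Q(G))`. -/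
noncomputable def Qpoly {V : Type*} [Fintype V] [DecidableEq V] (G : SimpleGraph V) :
    Polynomial ℝ :=
  (signlessLaplacian G).charpoly

/-- The signless Laplacian coefficients: `φ_i(G)` is `(-1)^i` times the coefficient of
`x^(n-i)` in the signless Laplacian characteristic polynomial. -/
noncomputable def phi {V : Type*} [Fintype V] [DecidableEq V] (G : SimpleGraph V) (i : ℕ) : ℝ :=
  (-1 : ℝ) ^ i * (Qpoly G).coeff (Fintype.card V - i)
/-- Attach `p i` pendant vertices at each vertex `i` of a base graph `H` on `Fin k`. -/
def addPendants {k : ℕ} (H : SimpleGraph (Fin k)) (p : Fin k → ℕ) :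
    SimpleGraph ((Fin k) ⊕ (Σ i : Fin k, Fin (p i))) where
  Adj x y :=
    match x, y with
    | Sum.inl a, Sum.inl b => H.Adj a b
    | Sum.inl a, Sum.inr b => a = b.1
    | Sum.inr a, Sum.inl b => a.1 = b
    | Sum.inr _, Sum.inr _ => False
  symm := ⟨by
    rintro (a | a) (b | b) h
    · exact H.adj_symm h
    · exact h.symm
    · exact h.symm
    · exact h⟩
  loopless := ⟨by
    rintro (a | a) h
    · exact H.irrefl h
    · exact h⟩
/-- The base of `B₇`: the complete bipartite graph `K_{2,3}` with parts `{u,v} = {0,1}` and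
`{u₁,w₁,v₁} = {2,3,4}`. -/
def B7base : SimpleGraph (Fin 5) :=
  SimpleGraph.fromRel (fun a b =>
    (a = 0 ∧ b = 2) ∨ (a = 0 ∧ b = 3) ∨ (a = 0 ∧ b = 4) ∨
    (a = 1 ∧ b = 2) ∨ (a = 1 ∧ b = 3) ∨ (a = 1 ∧ b = 4))

/-- `B₇(a,b,c,d,e)`: the base `B₇` with `a,…,e` pendant vertices attached at
`u,v,u₁,w₁,v₁` respectively. -/
def B7 (a b c d e : ℕ) := addPendants B7base ![a, b, c, d, e]

/-! Listing the base vertices before the pendant ones, `Q(G) = [[Q(H) + diag p, B], [Bᵀ, I]]`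
where `B` is the base–pendant incidence matrix, so `B Bᵀ = diag p`. Taking the Schur complement
of the block `(x - 1) I` (multiplied through by powers of `x - 1`, so that nothing is inverted)
turns the characteristic polynomial into a determinant of size `|H|`:
`Q_G(x) (x - 1)^|H| = det ((x - 1)(x I - Q(H) - diag p) - diag p) · (x - 1)^(Σ p)`.
For `B_n²` that determinant is a `5 × 5` one with the sparsity pattern of `K_{2,3}`, which
equals `c² (a b c - 3 s² (a + b))` in terms of its diagonal entries `a, b, c` and the
off-diagonal entry `-s`; here it factors as `x (x - 1)⁴ (x - 2)²` times the cubic. -/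

open Matrix

lemma det_fromBlocks_smul_one₂₂_mul_pow {R m n : Type*} [CommRing R] [Fintype m] [Fintype n]
    [DecidableEq m] [DecidableEq n] (A : Matrix m m R) (B : Matrix m n R) (C : Matrix n m R)
    (s : R) :
    (fromBlocks A B C (s • 1)).det * s ^ Fintype.card m =
      (s • A - B * C).det * s ^ Fintype.card n := by
  have hmul : fromBlocks A B C (s • 1) * fromBlocks (s • 1) 0 (-C) 1 =
      fromBlocks (s • A - B * C) B 0 (s • 1) := by
    simp [fromBlocks_multiply, sub_eq_add_neg]
  simpa [det_fromBlocks_zero₁₂, det_fromBlocks_zero₂₁, det_smul] using congrArg det hmul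

lemma signlessLaplacian_apply {V : Type*} [Fintype V] [DecidableEq V] (G : SimpleGraph V)
    [DecidableRel G.Adj] (i j : V) :
    signlessLaplacian G i j =
      (if i = j then (G.degree i : ℝ) else 0) + if G.Adj i j then 1 else 0 := by
  rw [signlessLaplacian, Subsingleton.elim (Classical.decRel G.Adj) ‹_›]
  simp only [Matrix.add_apply, SimpleGraph.degMatrix, diagonal_apply, SimpleGraph.adjMatrix_apply]

section Pendants

variable {k : ℕ} (H : SimpleGraph (Fin k)) (p : Fin k → ℕ)

@[simp] lemma addPendants_adj_inl_inl {a b : Fin k} :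
    (addPendants H p).Adj (.inl a) (.inl b) ↔ H.Adj a b := Iff.rfl

@[simp] lemma addPendants_adj_inl_inr {a : Fin k} {s : Σ i, Fin (p i)} :
    (addPendants H p).Adj (.inl a) (.inr s) ↔ a = s.1 := Iff.rfl

@[simp] lemma addPendants_adj_inr_inl {s : Σ i, Fin (p i)} {b : Fin k} :
    (addPendants H p).Adj (.inr s) (.inl b) ↔ s.1 = b := Iff.rfl

@[simp] lemma not_addPendants_adj_inr_inr {s t : Σ i, Fin (p i)} :
    ¬ (addPendants H p).Adj (.inr s) (.inr t) := id

variable [DecidableRel (addPendants H p).Adj] in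
lemma degree_addPendants_inr (s : Σ i, Fin (p i)) :
    ((addPendants H p).degree (.inr s) : ℝ) = 1 := by
  rw [SimpleGraph.degree_eq_sum_if_adj, Fintype.sum_sum_type]
  simp

variable [DecidableRel H.Adj] [DecidableRel (addPendants H p).Adj] in
lemma degree_addPendants_inl (a : Fin k) :
    ((addPendants H p).degree (.inl a) : ℝ) = H.degree a + p a := by
  rw [SimpleGraph.degree_eq_sum_if_adj, H.degree_eq_sum_if_adj, Fintype.sum_sum_type,
    ← Finset.univ_sigma_univ, Finset.sum_sigma]
  simp

def pendantIncidence : Matrix (Fin k) (Σ i, Fin (p i)) ℝ :=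
  of fun i s => if i = s.1 then 1 else 0

lemma pendantIncidence_mul_transpose :
    pendantIncidence p * (pendantIncidence p)ᵀ = diagonal fun i => (p i : ℝ) := by
  ext i j
  rw [mul_apply, ← Finset.univ_sigma_univ, Finset.sum_sigma]
  by_cases h : i = j <;> simp [pendantIncidence, h]

lemma signlessLaplacian_addPendants :
    signlessLaplacian (addPendants H p) =
      fromBlocks (signlessLaplacian H + diagonal fun i => (p i : ℝ)) (pendantIncidence p)
        (pendantIncidence p)ᵀ 1 := by
  classical
  ext (a | s) (b | t)
  · simp only [signlessLaplacian_apply, Sum.inl.injEq, degree_addPendants_inl,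
      addPendants_adj_inl_inl, fromBlocks_apply₁₁, Matrix.add_apply, diagonal_apply]
    split_ifs <;> ring
  · simp [signlessLaplacian_apply, pendantIncidence]
  · simp [signlessLaplacian_apply, pendantIncidence, eq_comm]
  · simp [signlessLaplacian_apply, degree_addPendants_inr, one_apply]

theorem Qpoly_addPendants_mul_pow :
    Qpoly (addPendants H p) * (X - 1) ^ k =
      ((X - 1 : ℝ[X]) • charmatrix (signlessLaplacian H + diagonal fun i => (p i : ℝ)) -
        diagonal fun i => (p i : ℝ[X])).det * (X - 1) ^ ∑ i, p i := by
  have hBC : -(pendantIncidence p).map C * -(pendantIncidence p)ᵀ.map C =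
      diagonal fun i => (p i : ℝ[X]) := by
    rw [Matrix.neg_mul, Matrix.mul_neg, neg_neg, ← Matrix.map_mul, pendantIncidence_mul_transpose,
      diagonal_map (map_zero C)]
    simp
  have hschur := det_fromBlocks_smul_one₂₂_mul_pow
    (charmatrix (signlessLaplacian H + diagonal fun i => (p i : ℝ)))
    (-(pendantIncidence p).map C) (-(pendantIncidence p)ᵀ.map C) (X - 1)
  rw [hBC, Fintype.card_fin, Fintype.card_sigma] at hschur
  simpa [Qpoly, signlessLaplacian_addPendants, charpoly, charmatrix_fromBlocks,
    smul_one_eq_diagonal] using hschur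

end Pendants

lemma signlessLaplacian_B7base :
    signlessLaplacian B7base =
      !![3, 0, 1, 1, 1; 0, 3, 1, 1, 1; 1, 1, 2, 0, 0; 1, 1, 0, 2, 0; 1, 1, 0, 0, 2] := by
  classical
  ext i j
  rw [signlessLaplacian_apply, SimpleGraph.degree_eq_sum_if_adj, Fin.sum_univ_five]
  fin_cases i <;> fin_cases j <;> simp [B7base] <;> norm_num

lemma det_K23_pattern {R : Type*} [CommRing R] (a b c s : R) :
    !![a, 0, -s, -s, -s; 0, b, -s, -s, -s; -s, -s, c, 0, 0; -s, -s, 0, c, 0;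
      -s, -s, 0, 0, c].det =
      c ^ 2 * (a * b * c - 3 * s ^ 2 * (a + b)) := by
  simp [det_succ_row_zero, Fin.sum_univ_succ, Fin.succAbove]
  ring

lemma det_pendantSchur_B7base (m : ℕ) :
    ((X - 1 : ℝ[X]) • charmatrix (signlessLaplacian B7base +
        diagonal fun i => ((![m, 0, 0, 0, 0] i : ℕ) : ℝ)) -
        diagonal fun i => ((![m, 0, 0, 0, 0] i : ℕ) : ℝ[X])).det =
      X * (X - 1) ^ 4 * (X - 2) ^ 2 *
        (X ^ 3 - ((m + 5 : ℝ[X]) + 4) * X ^ 2 + (5 * (m + 5 : ℝ[X]) - 2) * X -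
          3 * (m + 5 : ℝ[X])) := by
  rw [signlessLaplacian_B7base]
  convert det_K23_pattern ((X - 1) * (X - (3 + (m : ℝ[X]))) - (m : ℝ[X])) ((X - 1) * (X - 3))
    ((X - 1) * (X - 2)) (X - 1) using 1
  · congr 1
    ext i j
    fin_cases i <;> fin_cases j <;> simp [map_ofNat]
  · ring

lemma Qpoly_B7_mul_pow (m : ℕ) :
    Qpoly (B7 m 0 0 0 0) * (X - 1) ^ 5 =
      X * (X - 1) ^ 4 * (X - 2) ^ 2 *
        (X ^ 3 - ((m + 5 : ℝ[X]) + 4) * X ^ 2 + (5 * (m + 5 : ℝ[X]) - 2) * X -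
          3 * (m + 5 : ℝ[X])) *
        (X - 1) ^ m := by
  rw [B7, Qpoly_addPendants_mul_pow, det_pendantSchur_B7base]
  simp [Fin.sum_univ_five]

/-- the signless Laplacian characteristic polynomial of
`B_n² = B₇(n−5,0,0,0,0)`. -/
theorem Qpoly_Bn2 (n : ℕ) (hn : 6 ≤ n) :
    Qpoly (B7 (n - 5) 0 0 0 0) =
      X * (X - 1) ^ (n - 6) * (X - 2) ^ 2 *
        (X ^ 3 - ((n : ℝ[X]) + 4) * X ^ 2 + (5 * (n : ℝ[X]) - 2) * X - 3 * (n : ℝ[X])) := by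
  obtain ⟨m, rfl⟩ : ∃ m, n = m + 6 := ⟨n - 6, by omega⟩
  have hX1 : (X - 1 : ℝ[X]) ^ 5 ≠ 0 := pow_ne_zero _ (by simpa using X_sub_C_ne_zero (1 : ℝ))
  apply mul_right_cancel₀ hX1
  rw [Qpoly_B7_mul_pow, show m + 6 - 5 = m + 1 by omega, Nat.add_sub_cancel]
  push_cast
  ring
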